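/- (Splittability of III* into I₆ + II + I₁ and into I₆ + I₂ + I₁) (a) There exist matrices C, D, B ∈ SL(2,ℤ) with C conjugate in SL(2,ℤ) to A_{I₆} = [[1,6],[0,1]], D conjugate to A_{II} = [[1,1],[-1,0]], and B conjugate to A_{I₁} = [[1,1],[0,1]], such that C·D·B is conjugate to A_{III*} = [[0,-1],[1,0]]. (b) There exist matrices C, D, B ∈ SL(2,ℤ) with C conjugate to A_{I₆}, D conjugate to A_{I₂} = [[1,2],[0,1]], and B conjugate to A_{I₁}, such that C·D·B is conjugate to A_{III*}. In other words, the fiber type III* admits monodromy decompositions into I₆ + II + I₁ and into I₆ + I₂ + I₁. -/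

import Mathlib

/-- The special linear group `SL(2, ℤ)`. -/
abbrev SL2Z := Matrix.SpecialLinearGroup (Fin 2) ℤ

/-- `A` is conjugate to `B` in `SL(2, ℤ)`: there is `P ∈ SL(2,ℤ)` with `P * A * P⁻¹ = B`. -/
def ConjTo (A B : SL2Z) : Prop := ∃ P : SL2Z, P * A * P⁻¹ = B

/-- The standard monodromy matrix `A_{I_n} = [[1,n],[0,1]]`. -/
def AI (n : ℤ) : SL2Z := ⟨!![1, n; 0, 1], by simp [Matrix.det_fin_two_of]⟩

/-- The standard monodromy matrix `A_{II} = [[1,1],[-1,0]]`. -/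
def AII : SL2Z := ⟨!![1, 1; -1, 0], by norm_num [Matrix.det_fin_two_of]⟩

/-- The standard monodromy matrix `A_{III} = [[0,1],[-1,0]]`. -/
def AIII : SL2Z := ⟨!![0, 1; -1, 0], by norm_num [Matrix.det_fin_two_of]⟩

/-- The standard monodromy matrix `A_{IV} = [[0,1],[-1,-1]]`. -/
def AIV : SL2Z := ⟨!![0, 1; -1, -1], by norm_num [Matrix.det_fin_two_of]⟩

/-- The standard monodromy matrix `A_{I₀*} = -I`. -/
def negI : SL2Z := ⟨!![-1, 0; 0, -1], by norm_num [Matrix.det_fin_two_of]⟩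

/-- The standard monodromy matrix `A_{I_n*} = -[[1,n],[0,1]]`. -/
def AIstar (n : ℤ) : SL2Z := ⟨!![-1, -n; 0, -1], by simp [Matrix.det_fin_two_of]⟩

/-- The standard monodromy matrix `A_{IV*} = [[-1,-1],[1,0]]`. -/
def AIVstar : SL2Z := ⟨!![-1, -1; 1, 0], by norm_num [Matrix.det_fin_two_of]⟩

/-- The standard monodromy matrix `A_{III*} = [[0,-1],[1,0]]`. -/
def AIIIstar : SL2Z := ⟨!![0, -1; 1, 0], by norm_num [Matrix.det_fin_two_of]⟩

/-- The standard monodromy matrix `A_{II*} = [[0,-1],[1,1]]`. -/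
def AIIstar : SL2Z := ⟨!![0, -1; 1, 1], by norm_num [Matrix.det_fin_two_of]⟩

/-!
Write `T = A_{I₁}`, `S = A_{III*}` and `Lₘ = [[1,0],[m,1]]`. Taking the first factor to be `T⁶`
itself, it suffices to find conjugates `D` of the middle type and `B` of `T` with `T⁶ · D · B = S`
exactly: `D = T⁻¹ A_{II} T`, `B = L₂⁻¹ T L₂` and `D = L₁⁻¹ T² L₁`, `B = L₃⁻¹ T L₃` do it.
-/

def lowerUnipotent (m : ℤ) : SL2Z := ⟨!![1, 0; m, 1], by simp [Matrix.det_fin_two_of]⟩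

theorem ConjTo.refl (A : SL2Z) : ConjTo A A :=
  ⟨1, by simp⟩

theorem conjTo_inv_mul_mul (P A : SL2Z) : ConjTo (P⁻¹ * A * P) A :=
  ⟨P, by group⟩

theorem exists_decomposition_of_mul_conj_eq {X₁ X₂ X₃ X : SL2Z} (P₂ P₃ : SL2Z)
    (h : X₁ * (P₂⁻¹ * X₂ * P₂) * (P₃⁻¹ * X₃ * P₃) = X) :
    ∃ C D B : SL2Z, ConjTo C X₁ ∧ ConjTo D X₂ ∧ ConjTo B X₃ ∧ ConjTo (C * D * B) X :=
  ⟨X₁, _, _, .refl X₁, conjTo_inv_mul_mul P₂ X₂, conjTo_inv_mul_mul P₃ X₃, h ▸ .refl X⟩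

/-- The fiber type `III*` admits monodromy decompositions into `I₆ + II + I₁` and
into `I₆ + I₂ + I₁`. -/
theorem IIIstar_decomposition_I6_II_I1_and_I6_I2_I1 :
    (∃ C D B : SL2Z, ConjTo C (AI 6) ∧ ConjTo D AII ∧ ConjTo B (AI 1) ∧
      ConjTo (C * D * B) AIIIstar) ∧
    (∃ C D B : SL2Z, ConjTo C (AI 6) ∧ ConjTo D (AI 2) ∧ ConjTo B (AI 1) ∧
      ConjTo (C * D * B) AIIIstar) :=
  ⟨exists_decomposition_of_mul_conj_eq (AI 1) (lowerUnipotent 2) (by decide),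
    exists_decomposition_of_mul_conj_eq (lowerUnipotent 1) (lowerUnipotent 3) (by decide)⟩
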